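/- Let s > 1/2 and let Z_{N−M} denote the Nth roots of unity on the unit circle with M consecutive points removed, where M = M(N) satisfies M → ∞ and M/N → 0 as N → ∞, and assume N^s·M/(N−M) → ∞. Then, with B̃_{2s}(1) = 2Σ_{ℓ≥1}(1+ℓ²)^{−s}, the worst-case error satisfies wce(Q[Z_{N−M}]; W_2^s(S¹)) = √(B̃_{2s}(1)) · (M/(N−M)) · (1 + o(1)) as N → ∞; in particular (Z_{N−M}) is not a QMC design sequence for W_2^s(S¹). -/

import Mathlib

open Real Finset Filter

/-- The zonal Bessel kernel (constant term removed) on the unit circle, as a function of the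
angle: `B̃_s(cos φ) = 2 Σ_{ℓ≥1} cos(ℓφ)/(1+ℓ²)^{s/2}`. -/
noncomputable def circleBesselKernel (s : ℝ) (φ : ℝ) : ℝ :=
  2 * ∑' ℓ : ℕ, Real.cos (((ℓ : ℝ) + 1) * φ) / (1 + ((ℓ : ℝ) + 1) ^ 2) ^ (s / 2)

/-- Squared worst-case error for the `N`th roots of unity with the first `M` (consecutive)
points removed, via the reproducing-kernel formula. -/
noncomputable def wceSqRootsMinus (s : ℝ) (M N : ℕ) : ℝ :=
  (1 / ((N : ℝ) - (M : ℝ)) ^ 2) * ∑ j ∈ Finset.Ico M N, ∑ k ∈ Finset.Ico M N,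
    circleBesselKernel (2 * s) (2 * π * ((j : ℝ) - (k : ℝ)) / N)

/-!
Expanding the kernel in its Fourier series gives
`wce² = 2 (N - M)⁻² Σ_ℓ (1 + (ℓ+1)²)^{-s} |Σ_{M ≤ j < N} ζ^{(ℓ+1) j}|²`
with `ζ = e^{2πi/N}`. If `N ∤ ℓ + 1`, the sum over all `N` roots vanishes, so the inner sum is
minus the sum over the `M` removed points, whose modulus is `M (1 + O((ℓ+1) M / N))`; by
dominated convergence these frequencies contribute `B̃_{2s}(1) (M / (N - M))² (1 + o(1))`.
If `N ∣ ℓ + 1`, the inner sum is `N - M` and these frequencies contribute at most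
`2 ζ(2s) N^{-2s}`, which is negligible exactly because `N^s M / (N - M) → ∞`.
The same hypothesis then rules out `wce = O(N^{-s})`.
-/

open Complex (I)

namespace CircleWce

lemma exp_mul_I_pow (θ : ℝ) (j : ℕ) :
    Complex.exp (θ * I) ^ j = Complex.exp ((j * θ : ℝ) * I) := by
  rw [← Complex.exp_nat_mul]; push_cast; ring_nf

lemma sum_sum_cos_mul_sub_eq_norm_sq (t : Finset ℕ) (θ : ℝ) :
    ∑ j ∈ t, ∑ k ∈ t, Real.cos (θ * ((j : ℝ) - k)) =
      ‖∑ j ∈ t, Complex.exp (θ * I) ^ j‖ ^ 2 := by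
  have hterm : ∀ j k : ℕ, Real.cos (θ * ((j : ℝ) - k)) =
      (Complex.exp (θ * I) ^ j * (starRingEnd ℂ) (Complex.exp (θ * I) ^ k)).re := by
    intro j k
    rw [exp_mul_I_pow, exp_mul_I_pow, ← Complex.exp_conj, map_mul, Complex.conj_ofReal,
      Complex.conj_I, ← Complex.exp_add, ← Complex.exp_ofReal_mul_I_re]
    congr 2
    push_cast; ring
  simp_rw [hterm, ← Complex.re_sum, ← Finset.sum_mul_sum, ← map_sum, Complex.mul_conj,
    Complex.ofReal_re, Complex.sq_norm]

lemma norm_sum_pow_le_card {𝕜 : Type*} [NormedDivisionRing 𝕜] {z : 𝕜} (hz : ‖z‖ = 1)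
    (t : Finset ℕ) : ‖∑ j ∈ t, z ^ j‖ ≤ #t := by
  simpa using norm_sum_le_of_le t (n := fun _ => (1 : ℝ)) (fun j _ => by simp [norm_pow, hz])

lemma norm_sum_range_exp_pow_sub_le (θ : ℝ) (M : ℕ) :
    ‖∑ j ∈ range M, Complex.exp (θ * I) ^ j - M‖ ≤ (M : ℝ) ^ 2 * |θ| := by
  have hterm : ∀ j ∈ range M, ‖Complex.exp (θ * I) ^ j - 1‖ ≤ M * |θ| := by
    intro j hj
    have hjM : (j : ℝ) ≤ M := by exact_mod_cast (mem_range.mp hj).le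
    calc ‖Complex.exp (θ * I) ^ j - 1‖ ≤ |j * θ| := by
          rw [exp_mul_I_pow, mul_comm]; exact Real.norm_exp_I_mul_ofReal_sub_one_le
      _ ≤ M * |θ| := by rw [abs_mul, Nat.abs_cast]; gcongr
  calc ‖∑ j ∈ range M, Complex.exp (θ * I) ^ j - M‖
      = ‖∑ j ∈ range M, (Complex.exp (θ * I) ^ j - 1)‖ := by simp [sum_sub_distrib]
    _ ≤ ∑ _j ∈ range M, (M : ℝ) * |θ| := norm_sum_le_of_le _ hterm
    _ = (M : ℝ) ^ 2 * |θ| := by rw [sum_const, card_range, nsmul_eq_mul]; ring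

lemma sum_Ico_pow_eq_neg_sum_range {K : Type*} [DivisionRing K] {z : K} {M N : ℕ}
    (hzN : z ^ N = 1) (hz : z ≠ 1) (hMN : M ≤ N) :
    ∑ j ∈ Ico M N, z ^ j = -∑ j ∈ range M, z ^ j := by
  rw [sum_Ico_eq_sub _ hMN, geom_sum_eq hz, hzN, sub_self, zero_div, zero_sub]

lemma tsum_ite_dvd_succ {α : Type*} [AddCommMonoid α] [TopologicalSpace α] (f : ℕ → α)
    {N : ℕ} (hN : 0 < N) :
    ∑' ℓ, (if N ∣ ℓ + 1 then f ℓ else 0) = ∑' ν, f ((ν + 1) * N - 1) := by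
  have hsucc : ∀ ν, (ν + 1) * N - 1 + 1 = (ν + 1) * N := fun ν =>
    Nat.sub_add_cancel (Nat.one_le_iff_ne_zero.mpr (by positivity))
  rw [← Function.Injective.tsum_eq (g := fun ν => (ν + 1) * N - 1)]
  · simp [hsucc]
  · intro a b hab
    have := congrArg (· + 1) hab
    simp only [hsucc] at this
    exact Nat.succ_injective (Nat.eq_of_mul_eq_mul_right hN this)
  · intro ℓ hℓ
    obtain ⟨d, hd⟩ : N ∣ ℓ + 1 := by by_contra h; simp [h] at hℓ
    obtain ⟨ν, rfl⟩ := Nat.exists_eq_add_one_of_ne_zero (by rintro rfl; simp at hd : d ≠ 0)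
    exact ⟨ν, by rw [mul_comm] at hd; simp only; omega⟩

noncomputable def besselCoeff (s : ℝ) (ℓ : ℕ) : ℝ := (1 + ((ℓ : ℝ) + 1) ^ 2) ^ (-s)

lemma besselCoeff_pos (s : ℝ) (ℓ : ℕ) : 0 < besselCoeff s ℓ :=
  Real.rpow_pos_of_pos (by positivity) _

lemma besselCoeff_le {s : ℝ} (hs : 0 ≤ s) (ℓ : ℕ) :
    besselCoeff s ℓ ≤ ((ℓ : ℝ) + 1) ^ (-(2 * s)) := by
  rw [neg_mul_eq_mul_neg, Real.rpow_mul (by positivity), Real.rpow_two]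
  exact Real.rpow_le_rpow_of_nonpos (by positivity) (by linarith) (by linarith)

lemma summable_nat_add_one_rpow {p : ℝ} (hp : p < -1) :
    Summable (fun ν : ℕ => ((ν : ℝ) + 1) ^ p) := by
  simpa using (summable_nat_add_iff 1).mpr (Real.summable_nat_rpow.mpr hp)

lemma summable_besselCoeff {s : ℝ} (hs : 1 / 2 < s) : Summable (besselCoeff s) :=
  (summable_nat_add_one_rpow (by linarith)).of_nonneg_of_le
    (fun ℓ => (besselCoeff_pos s ℓ).le) (besselCoeff_le (by linarith))

lemma circleBesselKernel_two_mul (s φ : ℝ) :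
    circleBesselKernel (2 * s) φ =
      2 * ∑' ℓ : ℕ, besselCoeff s ℓ * Real.cos (((ℓ : ℝ) + 1) * φ) := by
  unfold circleBesselKernel besselCoeff
  congr 1
  refine tsum_congr fun ℓ => ?_
  rw [mul_div_cancel_left₀ s two_ne_zero, Real.rpow_neg (by positivity), div_eq_inv_mul]

lemma circleBesselKernel_zero (s : ℝ) :
    circleBesselKernel (2 * s) 0 = 2 * ∑' ℓ, besselCoeff s ℓ := by
  simp [circleBesselKernel_two_mul]

noncomputable def rootSum (M N ℓ : ℕ) : ℂ :=
  ∑ j ∈ Ico M N, (Complex.exp (2 * π * I / N) ^ (ℓ + 1)) ^ j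

lemma exp_two_pi_I_div_pow (N ℓ : ℕ) :
    Complex.exp (2 * π * I / N) ^ (ℓ + 1) =
      Complex.exp ((((ℓ : ℝ) + 1) * (2 * π / N) : ℝ) * I) := by
  rw [← Complex.exp_nat_mul]; push_cast; ring_nf

lemma wceSqRootsMinus_eq_tsum {s : ℝ} (hs : 1 / 2 < s) (M N : ℕ) :
    wceSqRootsMinus s M N =
      2 / ((N : ℝ) - M) ^ 2 * ∑' ℓ, besselCoeff s ℓ * ‖rootSum M N ℓ‖ ^ 2 := by
  have hsummable : ∀ φ : ℝ,
      Summable fun ℓ : ℕ => besselCoeff s ℓ * Real.cos (((ℓ : ℝ) + 1) * φ) :=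
    fun φ => (summable_besselCoeff hs).of_norm_bounded fun ℓ => by
      rw [norm_mul, Real.norm_of_nonneg (besselCoeff_pos s ℓ).le]
      exact mul_le_of_le_one_right (besselCoeff_pos s ℓ).le (Real.abs_cos_le_one _)
  have hinner : ∀ ℓ : ℕ, ∑ j ∈ Ico M N, ∑ k ∈ Ico M N,
      besselCoeff s ℓ * Real.cos (((ℓ : ℝ) + 1) * (2 * π * ((j : ℝ) - k) / N)) =
        besselCoeff s ℓ * ‖rootSum M N ℓ‖ ^ 2 := by
    intro ℓ
    rw [rootSum, exp_two_pi_I_div_pow, ← sum_sum_cos_mul_sub_eq_norm_sq, mul_sum]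
    refine sum_congr rfl fun j _ => ?_
    rw [mul_sum]
    refine sum_congr rfl fun k _ => ?_
    ring_nf
  unfold wceSqRootsMinus
  simp_rw [circleBesselKernel_two_mul, ← mul_sum,
    ← Summable.tsum_finsetSum fun k _ => hsummable _]
  rw [← Summable.tsum_finsetSum fun j _ => summable_sum fun k _ => hsummable _]
  simp_rw [hinner]
  ring

section RootSum

variable {M N ℓ : ℕ}

lemma norm_exp_two_pi_I_div_pow (N ℓ : ℕ) :
    ‖Complex.exp (2 * π * I / N) ^ (ℓ + 1)‖ = 1 := by
  rw [exp_two_pi_I_div_pow]; exact Complex.norm_exp_ofReal_mul_I _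

lemma norm_rootSum_le (hMN : M ≤ N) : ‖rootSum M N ℓ‖ ≤ (N : ℝ) - M := by
  have := norm_sum_pow_le_card (norm_exp_two_pi_I_div_pow N ℓ) (Ico M N)
  rwa [Nat.card_Ico, Nat.cast_sub hMN] at this

lemma rootSum_eq_neg_sum_range (hN : 0 < N) (hMN : M ≤ N) (h : ¬N ∣ ℓ + 1) :
    rootSum M N ℓ = -∑ j ∈ range M, (Complex.exp (2 * π * I / N) ^ (ℓ + 1)) ^ j := by
  have hζ := Complex.isPrimitiveRoot_exp N hN.ne'
  refine sum_Ico_pow_eq_neg_sum_range ?_ (mt (hζ.pow_eq_one_iff_dvd _).mp h) hMN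
  rw [pow_right_comm, hζ.pow_eq_one, one_pow]

lemma norm_rootSum_le_of_not_dvd (hN : 0 < N) (hMN : M ≤ N) (h : ¬N ∣ ℓ + 1) :
    ‖rootSum M N ℓ‖ ≤ M := by
  rw [rootSum_eq_neg_sum_range hN hMN h, norm_neg]
  simpa using norm_sum_pow_le_card (norm_exp_two_pi_I_div_pow N ℓ) (range M)

lemma abs_norm_rootSum_sub_le (hN : 0 < N) (hMN : M ≤ N) (h : ¬N ∣ ℓ + 1) :
    |‖rootSum M N ℓ‖ - M| ≤ (M : ℝ) ^ 2 * (((ℓ : ℝ) + 1) * (2 * π / N)) := by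
  rw [rootSum_eq_neg_sum_range hN hMN h, norm_neg, exp_two_pi_I_div_pow]
  calc _ = |‖∑ j ∈ range M, Complex.exp ((((ℓ : ℝ) + 1) * (2 * π / N) : ℝ) * I) ^ j‖
          - ‖(M : ℂ)‖| := by rw [Complex.norm_natCast]
    _ ≤ _ := abs_norm_sub_norm_le _ _
    _ ≤ _ := norm_sum_range_exp_pow_sub_le _ M
    _ = _ := by rw [abs_of_nonneg (by positivity)]

end RootSum

section Weight

variable {s : ℝ} {M N ℓ : ℕ}

noncomputable def rootSumWeight (s : ℝ) (M N ℓ : ℕ) : ℝ :=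
  besselCoeff s ℓ * (‖rootSum M N ℓ‖ / M) ^ 2

lemma rootSumWeight_nonneg : 0 ≤ rootSumWeight s M N ℓ :=
  mul_nonneg (besselCoeff_pos s ℓ).le (sq_nonneg _)

lemma wceSqRootsMinus_eq_mul_tsum (hs : 1 / 2 < s) (hM : M ≠ 0) :
    wceSqRootsMinus s M N = 2 * ((M : ℝ) / (N - M)) ^ 2 * ∑' ℓ, rootSumWeight s M N ℓ := by
  simp_rw [wceSqRootsMinus_eq_tsum hs, rootSumWeight, div_pow, ← mul_div_assoc, tsum_div_const]
  field_simp

lemma sqrt_wceSqRootsMinus_div_eq (hs : 1 / 2 < s) (hM : M ≠ 0) (hMN : M < N) :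
    Real.sqrt (wceSqRootsMinus s M N) /
        (Real.sqrt (circleBesselKernel (2 * s) 0) * ((M : ℝ) / (N - M))) =
      Real.sqrt (∑' ℓ, rootSumWeight s M N ℓ) / Real.sqrt (∑' ℓ, besselCoeff s ℓ) := by
  have hNM : (0 : ℝ) < N - M := sub_pos.mpr (by exact_mod_cast hMN)
  rw [wceSqRootsMinus_eq_mul_tsum hs hM, circleBesselKernel_zero, mul_comm 2 (_ ^ 2), mul_assoc,
    Real.sqrt_mul (by positivity), Real.sqrt_sq (by positivity), Real.sqrt_mul zero_le_two,
    Real.sqrt_mul zero_le_two]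
  field_simp [hNM.ne']

lemma rootSumWeight_le (hMN : M ≤ N) :
    rootSumWeight s M N ℓ ≤ (((N : ℝ) - M) / M) ^ 2 * besselCoeff s ℓ := by
  rw [rootSumWeight, mul_comm]
  gcongr
  · exact (besselCoeff_pos s ℓ).le
  · exact norm_rootSum_le hMN

lemma rootSumWeight_le_besselCoeff (hN : 0 < N) (hMN : M ≤ N) (h : ¬N ∣ ℓ + 1) :
    rootSumWeight s M N ℓ ≤ besselCoeff s ℓ := by
  refine mul_le_of_le_one_right (besselCoeff_pos s ℓ).le (pow_le_one₀ (by positivity) ?_)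
  exact div_le_one_of_le₀ (norm_rootSum_le_of_not_dvd hN hMN h) (Nat.cast_nonneg M)

lemma summable_rootSumWeight (hs : 1 / 2 < s) (hMN : M ≤ N) : Summable (rootSumWeight s M N) :=
  ((summable_besselCoeff hs).mul_left _).of_nonneg_of_le (fun _ => rootSumWeight_nonneg)
    fun _ => rootSumWeight_le hMN

lemma besselCoeff_mul_sub_one_le (hs : 0 ≤ s) (hN : 0 < N) (ν : ℕ) :
    besselCoeff s ((ν + 1) * N - 1) ≤
      (N : ℝ) ^ (-(2 * s)) * ((ν : ℝ) + 1) ^ (-(2 * s)) := by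
  have hcast : (((ν + 1) * N - 1 : ℕ) : ℝ) + 1 = ((ν : ℝ) + 1) * N := by
    rw [Nat.cast_sub (Nat.one_le_iff_ne_zero.mpr (by positivity))]; push_cast; ring
  calc _ ≤ _ := besselCoeff_le hs _
    _ = _ := by rw [hcast, Real.mul_rpow (by positivity) (Nat.cast_nonneg N), mul_comm]

lemma tsum_rootSumWeight_dvd_le (hs : 1 / 2 < s) (hN : 0 < N) (hMN : M ≤ N) :
    ∑' ℓ, (if N ∣ ℓ + 1 then rootSumWeight s M N ℓ else 0) ≤
      (((N : ℝ) - M) / M) ^ 2 * (N : ℝ) ^ (-(2 * s)) *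
        ∑' ν : ℕ, ((ν : ℝ) + 1) ^ (-(2 * s)) := by
  have hle : ∀ ν, rootSumWeight s M N ((ν + 1) * N - 1) ≤
      (((N : ℝ) - M) / M) ^ 2 * (N : ℝ) ^ (-(2 * s)) * ((ν : ℝ) + 1) ^ (-(2 * s)) :=
    fun ν => (rootSumWeight_le hMN).trans <| by
      rw [mul_assoc]; gcongr; exact besselCoeff_mul_sub_one_le (by linarith) hN ν
  have hsum := (summable_nat_add_one_rpow (p := -(2 * s)) (by linarith)).mul_left
    ((((N : ℝ) - M) / M) ^ 2 * (N : ℝ) ^ (-(2 * s)))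
  rw [tsum_ite_dvd_succ _ hN, ← tsum_mul_left]
  exact (hsum.of_nonneg_of_le (fun _ => rootSumWeight_nonneg) hle).tsum_le_tsum hle hsum

end Weight

section Asymptotics

variable {s : ℝ} {M : ℕ → ℕ}

lemma eventually_lt_of_tendsto_div_zero
    (hMsmall : Tendsto (fun N : ℕ => (M N : ℝ) / N) atTop (nhds 0)) :
    ∀ᶠ N in atTop, M N < N := by
  filter_upwards [hMsmall.eventually (gt_mem_nhds one_pos), eventually_gt_atTop 0] with N h hN
  rw [div_lt_one (by positivity)] at h
  exact_mod_cast h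

lemma tendsto_rootSumWeight_of_not_dvd (hM : ∀ᶠ N in atTop, M N ≠ 0)
    (hMsmall : Tendsto (fun N : ℕ => (M N : ℝ) / N) atTop (nhds 0)) (ℓ : ℕ) :
    Tendsto (fun N => if N ∣ ℓ + 1 then 0 else rootSumWeight s (M N) N ℓ) atTop
      (nhds (besselCoeff s ℓ)) := by
  have hndvd : ∀ᶠ N in atTop, ¬N ∣ ℓ + 1 := by
    filter_upwards [eventually_gt_atTop (ℓ + 1)] with N hN hdvd
    exact (Nat.le_of_dvd ℓ.succ_pos hdvd).not_gt hN
  have hratio : Tendsto (fun N => ‖rootSum (M N) N ℓ‖ / M N) atTop (nhds 1) := by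
    rw [← tendsto_sub_nhds_zero_iff]
    refine squeeze_zero_norm' ?_ (by simpa using hMsmall.const_mul (2 * π * ((ℓ : ℝ) + 1)))
    filter_upwards [hM, eventually_lt_of_tendsto_div_zero hMsmall, hndvd] with N hM0 hMN hN
    have hMpos : (0 : ℝ) < M N := by positivity
    rw [Real.norm_eq_abs, div_sub_one hMpos.ne', abs_div, abs_of_pos hMpos, div_le_iff₀ hMpos]
    calc _ ≤ _ := abs_norm_rootSum_sub_le (by omega) hMN.le hN
      _ = _ := by ring
  have hlim := (hratio.pow 2).const_mul (besselCoeff s ℓ)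
  rw [one_pow, mul_one] at hlim
  refine hlim.congr' ?_
  filter_upwards [hndvd] with N hN
  rw [if_neg hN, rootSumWeight]

lemma tendsto_tsum_rootSumWeight_not_dvd (hs : 1 / 2 < s) (hM : ∀ᶠ N in atTop, M N ≠ 0)
    (hMsmall : Tendsto (fun N : ℕ => (M N : ℝ) / N) atTop (nhds 0)) :
    Tendsto (fun N => ∑' ℓ, if N ∣ ℓ + 1 then 0 else rootSumWeight s (M N) N ℓ) atTop
      (nhds (∑' ℓ, besselCoeff s ℓ)) := by
  refine tendsto_tsum_of_dominated_convergence (summable_besselCoeff hs)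
    (tendsto_rootSumWeight_of_not_dvd hM hMsmall) ?_
  filter_upwards [eventually_lt_of_tendsto_div_zero hMsmall] with N hMN ℓ
  split_ifs with h
  · simpa using (besselCoeff_pos s ℓ).le
  · rw [Real.norm_of_nonneg rootSumWeight_nonneg]
    exact rootSumWeight_le_besselCoeff (by omega) hMN.le h

lemma tendsto_tsum_rootSumWeight_dvd (hs : 1 / 2 < s) (hM : ∀ᶠ N in atTop, M N ≠ 0)
    (hMsmall : Tendsto (fun N : ℕ => (M N : ℝ) / N) atTop (nhds 0))
    (hbig : Tendsto (fun N : ℕ => (N : ℝ) ^ s * M N / (N - M N)) atTop atTop) :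
    Tendsto (fun N => ∑' ℓ, if N ∣ ℓ + 1 then rootSumWeight s (M N) N ℓ else 0) atTop
      (nhds 0) := by
  have hbound : Tendsto (fun N : ℕ => (∑' ν : ℕ, ((ν : ℝ) + 1) ^ (-(2 * s))) *
      ((N : ℝ) ^ s * M N / (N - M N))⁻¹ ^ 2) atTop (nhds 0) := by
    simpa using (hbig.inv_tendsto_atTop.pow 2).const_mul _
  refine squeeze_zero' (Eventually.of_forall fun N => tsum_nonneg fun ℓ => ?_) ?_ hbound
  · split_ifs
    exacts [rootSumWeight_nonneg, le_rfl]
  filter_upwards [hM, eventually_lt_of_tendsto_div_zero hMsmall] with N hM0 hMN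
  refine (tsum_rootSumWeight_dvd_le hs (by omega) hMN.le).trans_eq ?_
  have hNM : (N : ℝ) - M N ≠ 0 := sub_ne_zero.mpr (by exact_mod_cast hMN.ne')
  have hNs : (N : ℝ) ^ s ≠ 0 := (Real.rpow_pos_of_pos (by exact_mod_cast hMN.pos) s).ne'
  have hpow : (N : ℝ) ^ (-(2 * s)) = (((N : ℝ) ^ s) ^ 2)⁻¹ := by
    rw [Real.rpow_neg (Nat.cast_nonneg N), ← Real.rpow_natCast,
      ← Real.rpow_mul (Nat.cast_nonneg N), Nat.cast_ofNat, mul_comm]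
  rw [hpow]
  field_simp

lemma tendsto_tsum_rootSumWeight (hs : 1 / 2 < s) (hM : ∀ᶠ N in atTop, M N ≠ 0)
    (hMsmall : Tendsto (fun N : ℕ => (M N : ℝ) / N) atTop (nhds 0))
    (hbig : Tendsto (fun N : ℕ => (N : ℝ) ^ s * M N / (N - M N)) atTop atTop) :
    Tendsto (fun N => ∑' ℓ, rootSumWeight s (M N) N ℓ) atTop
      (nhds (∑' ℓ, besselCoeff s ℓ)) := by
  have hlim := (tendsto_tsum_rootSumWeight_not_dvd hs hM hMsmall).add
    (tendsto_tsum_rootSumWeight_dvd hs hM hMsmall hbig)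
  rw [add_zero] at hlim
  refine hlim.congr' ?_
  filter_upwards [eventually_lt_of_tendsto_div_zero hMsmall] with N hMN
  have hsum := summable_rootSumWeight hs hMN.le
  have hnot : Summable fun ℓ => if N ∣ ℓ + 1 then 0 else rootSumWeight s (M N) N ℓ :=
    hsum.of_nonneg_of_le (fun ℓ => by split_ifs <;> simp [rootSumWeight_nonneg])
      fun ℓ => by split_ifs <;> simp [rootSumWeight_nonneg]
  have hdvd : Summable fun ℓ => if N ∣ ℓ + 1 then rootSumWeight s (M N) N ℓ else 0 :=
    hsum.of_nonneg_of_le (fun ℓ => by split_ifs <;> simp [rootSumWeight_nonneg])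
      fun ℓ => by split_ifs <;> simp [rootSumWeight_nonneg]
  rw [← hnot.tsum_add hdvd]
  refine tsum_congr fun ℓ => ?_
  split_ifs <;> simp

end Asymptotics

lemma not_exists_le_mul_rpow_neg {e X : ℕ → ℝ} {a s : ℝ} (ha : 0 < a)
    (hratio : Tendsto (fun N => e N / (a * X N)) atTop (nhds 1))
    (hbig : Tendsto (fun N : ℕ => (N : ℝ) ^ s * X N) atTop atTop) :
    ¬∃ c > (0 : ℝ), ∀ N : ℕ, 2 ≤ N → e N ≤ c * (N : ℝ) ^ (-s) := by
  rintro ⟨c, -, hc⟩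
  have hzero : Tendsto (fun N : ℕ => c / a * ((N : ℝ) ^ s * X N)⁻¹) atTop (nhds 0) := by
    simpa using hbig.inv_tendsto_atTop.const_mul (c / a)
  have hle : ∀ᶠ N in atTop, e N / (a * X N) ≤ c / a * ((N : ℝ) ^ s * X N)⁻¹ := by
    filter_upwards [hbig.eventually_gt_atTop 0, eventually_ge_atTop 2] with N hpos hN
    have hNs : 0 < (N : ℝ) ^ s := Real.rpow_pos_of_pos (by positivity) s
    have hX : 0 < X N := pos_of_mul_pos_right hpos hNs.le
    rw [div_le_iff₀ (by positivity)]
    calc e N ≤ c * (N : ℝ) ^ (-s) := hc N hN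
      _ = _ := by rw [Real.rpow_neg (Nat.cast_nonneg N)]; field_simp
  linarith [le_of_tendsto_of_tendsto hratio hzero hle]

end CircleWce

open CircleWce in
theorem roots_of_unity_minus_M_wce_general (s : ℝ) (hs : 1 / 2 < s) (M : ℕ → ℕ)
    (hMsmall : Tendsto (fun N : ℕ => (M N : ℝ) / (N : ℝ)) atTop (nhds 0))
    (hbig : Tendsto (fun N : ℕ => (N : ℝ) ^ s * (M N : ℝ) / ((N : ℝ) - (M N : ℝ)))
      atTop atTop) :
    Tendsto (fun N : ℕ =>
        Real.sqrt (wceSqRootsMinus s (M N) N) /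
          (Real.sqrt (circleBesselKernel (2 * s) 0) * ((M N : ℝ) / ((N : ℝ) - (M N : ℝ)))))
      atTop (nhds 1) ∧
    ¬ ∃ c > (0 : ℝ), ∀ N : ℕ, 2 ≤ N →
        Real.sqrt (wceSqRootsMinus s (M N) N) ≤ c * (N : ℝ) ^ (-s) := by
  have hM : ∀ᶠ N in atTop, M N ≠ 0 := by
    filter_upwards [hbig.eventually_gt_atTop 0] with N hN hM0
    simp [hM0] at hN
  have hB : 0 < ∑' ℓ, besselCoeff s ℓ := (summable_besselCoeff hs).tsum_pos
    (fun ℓ => (besselCoeff_pos s ℓ).le) 0 (besselCoeff_pos s 0)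
  have hratio : Tendsto (fun N : ℕ =>
      Real.sqrt (wceSqRootsMinus s (M N) N) /
        (Real.sqrt (circleBesselKernel (2 * s) 0) * ((M N : ℝ) / ((N : ℝ) - (M N : ℝ)))))
      atTop (nhds 1) := by
    have hlim := (tendsto_tsum_rootSumWeight hs hM hMsmall hbig).sqrt.div_const
      (Real.sqrt (∑' ℓ, besselCoeff s ℓ))
    rw [div_self (Real.sqrt_pos.mpr hB).ne'] at hlim
    refine hlim.congr' ?_
    filter_upwards [hM, eventually_lt_of_tendsto_div_zero hMsmall] with N hM0 hMN
    exact (sqrt_wceSqRootsMinus_div_eq hs hM0 hMN).symm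
  refine ⟨hratio, not_exists_le_mul_rpow_neg ?_ hratio
    (by simpa only [mul_div_assoc] using hbig)⟩
  rw [circleBesselKernel_zero]
  positivity

theorem roots_of_unity_minus_M_wce (s : ℝ) (hs : 1 / 2 < s) (M : ℕ → ℕ)
    (hMinfty : Tendsto (fun N : ℕ => M N) atTop atTop)
    (hMsmall : Tendsto (fun N : ℕ => (M N : ℝ) / (N : ℝ)) atTop (nhds 0))
    (hbig : Tendsto (fun N : ℕ => (N : ℝ) ^ s * (M N : ℝ) / ((N : ℝ) - (M N : ℝ)))
      atTop atTop) :
    Tendsto (fun N : ℕ =>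
        Real.sqrt (wceSqRootsMinus s (M N) N) /
          (Real.sqrt (circleBesselKernel (2 * s) 0) * ((M N : ℝ) / ((N : ℝ) - (M N : ℝ)))))
      atTop (nhds 1) ∧
    ¬ ∃ c > (0 : ℝ), ∀ N : ℕ, 2 ≤ N →
        Real.sqrt (wceSqRootsMinus s (M N) N) ≤ c * (N : ℝ) ^ (-s) :=
  roots_of_unity_minus_M_wce_general s hs M hMsmall hbig
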